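/- Let (n_k) be a strictly increasing sequence of positive integers and let (x_k) be complex numbers with p_{n_k}(n_k · x_k) = 0 for every k. If x_k → x* as k → ∞, then |x*| ≤ 1/r_0. Consequently, every limit point of the zero sets {x ∈ ℂ : p_n(n x) = 0} (as n → ∞) lies in the closed disk of radius 1/r_0 centered at 0. -/

import Mathlib

/-!
Near the origin write `1 / g t = ∑ cⱼ tʲ`, convergent for `‖t‖ < r₀`. Cauchy's formula and the
Leibniz rule give `pₙ(z) = ∑_{j ≤ n} cⱼ z^(n-j) / (n-j)!`, hence, for `x ≠ 0`,
`n! / (n x)ⁿ · pₙ(n x) = ∑ⱼ cⱼ x⁻ʲ · n(n-1)⋯(n-j+1) / nʲ`.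
If `‖x*‖ > 1 / r₀`, the weights `n(n-1)⋯(n-j+1) / nʲ` lie in `[0, 1]` and tend to `1`, so by
dominated convergence these sums tend, along `n = n_k`, `x = x_k`, to `∑ cⱼ x*⁻ʲ = 1 / g(1/x*)`,
which is nonzero; but they vanish at the zeros.
-/

open Complex Metric Finset Filter Topology
open scoped Nat NNReal Real

noncomputable def taylorCoeff (f : ℂ → ℂ) (j : ℕ) : ℂ := iteratedDeriv j f 0 / j !

lemma summable_norm_taylorCoeff_mul_pow {f : ℂ → ℂ} {r : ℝ}
    (hf : DifferentiableOn ℂ f (ball 0 r)) {ρ : ℝ≥0} (hρ : (ρ : ℝ) < r) :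
    Summable fun j => ‖taylorCoeff f j‖ * (ρ : ℝ) ^ j := by
  obtain ⟨R, hρR, hRr⟩ := exists_between hρ
  have hR : 0 < R := ρ.2.trans_lt hρR
  lift R to ℝ≥0 using hR.le
  have hcauchy :=
    (hf.mono (closedBall_subset_ball hRr)).hasFPowerSeriesOnBall (by exact_mod_cast hR)
  rw [hcauchy.hasFPowerSeriesAt.eq_formalMultilinearSeries
    hcauchy.analyticAt.hasFPowerSeriesAt] at hcauchy
  simpa [taylorCoeff, FormalMultilinearSeries.ofScalars_norm] using
    FormalMultilinearSeries.summable_norm_mul_pow _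
      ((ENNReal.coe_lt_coe.2 hρR).trans_le hcauchy.r_le)

lemma hasSum_taylorCoeff_mul_pow {f : ℂ → ℂ} {r : ℝ}
    (hf : DifferentiableOn ℂ f (ball 0 r)) {z : ℂ} (hz : ‖z‖ < r) :
    HasSum (fun j => taylorCoeff f j * z ^ j) (f z) := by
  have hterm : (fun j => taylorCoeff f j * z ^ j) =
      fun j => (j ! : ℂ)⁻¹ • (z - 0) ^ j • iteratedDeriv j f 0 := by
    ext j
    simp only [taylorCoeff, sub_zero, smul_eq_mul]
    ring
  rw [hterm]
  exact Complex.hasSum_taylorSeries_on_ball hf (by simpa using hz)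

lemma circleIntegral_exp_mul_mul_div_pow_succ {h : ℂ → ℂ} {ε : ℝ} (hε : 0 < ε)
    (hh : DifferentiableOn ℂ h (closedBall 0 ε)) (x : ℂ) (n : ℕ) :
    1 / (2 * π * I) * ∮ t in C(0, ε), exp (x * t) * h t / t ^ (n + 1) =
      ∑ j ∈ range (n + 1), taylorCoeff h j * x ^ (n - j) / (n - j)! := by
  have hf : DifferentiableOn ℂ (fun t => h t * exp (x * t)) (closedBall 0 ε) :=
    hh.mul (by fun_prop)
  have hh0 : ContDiffAt ℂ n h 0 := (hh.analyticAt (closedBall_mem_nhds 0 hε)).contDiffAt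
  have hcauchy : ∮ t in C(0, ε), exp (x * t) * h t / t ^ (n + 1) =
      (2 * π * I / n !) * iteratedDeriv n (fun t => h t * exp (x * t)) 0 := by
    rw [← smul_eq_mul, ← hf.circleIntegral_one_div_sub_center_pow_smul hε n]
    refine circleIntegral.integral_congr hε.le fun t _ => ?_
    simp only [sub_zero, smul_eq_mul]
    ring
  have hexp : ContDiffAt ℂ n (fun t => exp (x * t)) 0 := by fun_prop
  simp only [hcauchy, iteratedDeriv_fun_mul hh0 hexp, iteratedDeriv_cexp_const_mul,
    mul_zero, exp_zero, mul_one, mul_sum]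
  refine sum_congr rfl fun j hj => ?_
  have hjn : j ≤ n := Nat.lt_succ_iff.mp (mem_range.mp hj)
  rw [Nat.cast_choose ℂ hjn, taylorCoeff]
  have h2πI := two_pi_I_ne_zero
  have hfac0 : (n ! : ℂ) ≠ 0 := mod_cast n.factorial_ne_zero
  field_simp

lemma norm_descFactorial_div_pow_le_one (n j : ℕ) :
    ‖(n.descFactorial j : ℂ) / (n : ℂ) ^ j‖ ≤ 1 := by
  rw [norm_div, norm_pow, Complex.norm_natCast, Complex.norm_natCast]
  exact div_le_one_of_le₀ (mod_cast n.descFactorial_le_pow j) (by positivity)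

lemma tendsto_descFactorial_div_pow (j : ℕ) :
    Tendsto (fun n : ℕ => (n.descFactorial j : ℂ) / (n : ℂ) ^ j) atTop (𝓝 1) := by
  induction j with
  | zero => simp
  | succ j ih =>
    have hlin : Tendsto (fun n : ℕ => 1 - (j : ℂ) / n) atTop (𝓝 1) := by
      simpa using tendsto_const_nhds.sub (tendsto_const_div_atTop_nhds_zero_nat (j : ℂ))
    refine (by simpa using ih.mul hlin : Tendsto _ _ (𝓝 (1 : ℂ))).congr' ?_
    filter_upwards [eventually_gt_atTop j] with n hn
    rw [Nat.descFactorial_succ, Nat.cast_mul, Nat.cast_sub hn.le, pow_succ]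
    have hn0 : (n : ℂ) ≠ 0 := Nat.cast_ne_zero.2 (by omega)
    field_simp

lemma factorial_div_pow_mul_sum_eq_tsum (c : ℕ → ℂ) {n : ℕ} (hn : n ≠ 0) {x : ℂ} (hx : x ≠ 0) :
    n ! / ((n : ℂ) * x) ^ n * ∑ j ∈ range (n + 1), c j * ((n : ℂ) * x) ^ (n - j) / (n - j)! =
      ∑' j, c j * x⁻¹ ^ j * ((n.descFactorial j : ℂ) / (n : ℂ) ^ j) := by
  rw [tsum_eq_sum (s := range (n + 1)) fun j hj => by
    simp [Nat.descFactorial_eq_zero_iff_lt.2 (by simpa using hj)], mul_sum]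
  refine sum_congr rfl fun j hj => ?_
  have hjn : j ≤ n := Nat.lt_succ_iff.mp (mem_range.mp hj)
  have hnx : (n : ℂ) * x ≠ 0 := mul_ne_zero (Nat.cast_ne_zero.2 hn) hx
  have hpow : ((n : ℂ) * x) ^ n = ((n : ℂ) * x) ^ (n - j) * ((n : ℂ) * x) ^ j := by
    rw [← pow_add, Nat.sub_add_cancel hjn]
  have hfac : (n ! : ℂ) = (n - j)! * n.descFactorial j :=
    mod_cast (Nat.factorial_mul_descFactorial hjn).symm
  have hfac0 : ((n - j)! : ℂ) ≠ 0 := mod_cast (n - j).factorial_ne_zero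
  rw [hpow, hfac, inv_pow]
  field_simp
  ring

lemma tendsto_tsum_taylorCoeff_mul_descFactorial {f : ℂ → ℂ} {r : ℝ}
    (hf : DifferentiableOn ℂ f (ball 0 r)) {ι : Type*} {l : Filter ι} {n : ι → ℕ}
    (hn : Tendsto n l atTop) {y : ι → ℂ} {y₀ : ℂ} (hy : Tendsto y l (𝓝 y₀)) (hy₀ : ‖y₀‖ < r) :
    Tendsto (fun k => ∑' j, taylorCoeff f j * y k ^ j * ((n k).descFactorial j / (n k : ℂ) ^ j))
      l (𝓝 (f y₀)) := by
  obtain ⟨ρ, hy₀ρ, hρr⟩ := exists_between hy₀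
  lift ρ to ℝ≥0 using (norm_nonneg _).trans hy₀ρ.le
  rw [← (hasSum_taylorCoeff_mul_pow hf hy₀).tsum_eq]
  refine tendsto_tsum_of_dominated_convergence (summable_norm_taylorCoeff_mul_pow hf hρr)
    (fun j => ?_) ?_
  · simpa using (tendsto_const_nhds.mul (hy.pow j)).mul ((tendsto_descFactorial_div_pow j).comp hn)
  · filter_upwards [hy.norm (eventually_lt_nhds hy₀ρ)] with k hk j
    calc ‖taylorCoeff f j * y k ^ j * ((n k).descFactorial j / (n k : ℂ) ^ j)‖
        ≤ ‖taylorCoeff f j‖ * (ρ : ℝ) ^ j * 1 := by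
          rw [norm_mul, norm_mul, norm_pow]
          gcongr
          exacts [hk.le, norm_descFactorial_div_pow_le_one _ _]
      _ = ‖taylorCoeff f j‖ * (ρ : ℝ) ^ j := mul_one _

theorem stmt_6_general (g : ℂ → ℂ) (hg : Differentiable ℂ g)
    (r0 : ℝ) (hr0pos : 0 < r0)
    (hr0 : IsLeast {r : ℝ | ∃ a : ℂ, g a = 0 ∧ ‖a‖ = r} r0)
    (p : ℕ → ℂ → ℂ)
    (hp : ∀ (n : ℕ) (x : ℂ) (ε : ℝ), 0 < ε → ε < r0 →
      p n x = (1 / (2 * (Real.pi : ℂ) * Complex.I)) *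
        ∮ t in C(0, ε), Complex.exp (x * t) / (g t * t ^ (n + 1)))
    (nk : ℕ → ℕ) (hmono : StrictMono nk)
    (x : ℕ → ℂ) (hzero : ∀ k, p (nk k) ((nk k : ℂ) * x k) = 0)
    (xstar : ℂ) (hlim : Filter.Tendsto x Filter.atTop (nhds xstar)) :
    ‖xstar‖ ≤ 1 / r0 := by
  by_contra! hgt
  have hxstar : xstar ≠ 0 := norm_pos_iff.1 ((by positivity : (0 : ℝ) < 1 / r0).trans hgt)
  have hinv : ‖xstar⁻¹‖ < r0 := by
    rw [norm_inv, inv_lt_comm₀ (norm_pos_iff.2 hxstar) hr0pos, ← one_div]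
    exact hgt
  have hg_ne : ∀ t : ℂ, ‖t‖ < r0 → g t ≠ 0 := fun t ht hgt_eq =>
    (hr0.2 ⟨t, hgt_eq, rfl⟩).not_gt ht
  set h : ℂ → ℂ := fun t => (g t)⁻¹
  have hh : DifferentiableOn ℂ h (ball 0 r0) :=
    hg.differentiableOn.inv fun t ht => hg_ne t (mem_ball_zero_iff.1 ht)
  have happell (n : ℕ) (z : ℂ) :
      p n z = ∑ j ∈ range (n + 1), taylorCoeff h j * z ^ (n - j) / (n - j)! := by
    rw [hp n z (r0 / 2) (half_pos hr0pos) (half_lt_self hr0pos),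
      ← circleIntegral_exp_mul_mul_div_pow_succ (half_pos hr0pos)
        (hh.mono (closedBall_subset_ball (half_lt_self hr0pos)))]
    congr 1
    exact circleIntegral.integral_congr (half_pos hr0pos).le fun t _ => by
      simp only [h, div_eq_mul_inv, mul_inv, mul_assoc]
  have hscaled : ∀ᶠ k in atTop, ∑' j, taylorCoeff h j * (x k)⁻¹ ^ j *
      ((nk k).descFactorial j / (nk k : ℂ) ^ j) = 0 := by
    filter_upwards [hlim.eventually_ne hxstar, hmono.tendsto_atTop.eventually_ne_atTop 0]
      with k hxk hnk
    rw [← factorial_div_pow_mul_sum_eq_tsum _ hnk hxk, ← happell, hzero, mul_zero]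
  have hh_zero : h xstar⁻¹ = 0 := tendsto_nhds_unique_of_eventuallyEq
    (tendsto_tsum_taylorCoeff_mul_descFactorial hh hmono.tendsto_atTop (hlim.inv₀ hxstar) hinv)
    tendsto_const_nhds hscaled
  exact hg_ne _ hinv (inv_eq_zero.1 hh_zero)

/-- With `g`, `r₀`, `p` as in the Appell setup, if `(n_k)` is a
strictly increasing sequence of positive integers, `(x_k)` are complex numbers with
`p_{n_k}(n_k x_k) = 0` for all `k`, and `x_k → x*`, then `|x*| ≤ 1/r₀`; i.e. every
limit point of the zero sets of `x ↦ pₙ(nx)` lies in the closed disk of radius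
`1/r₀` centered at `0`. -/
theorem stmt_6 (g : ℂ → ℂ) (hg : Differentiable ℂ g) (hg0 : g 0 ≠ 0)
    (r0 : ℝ) (hr0pos : 0 < r0)
    (hr0 : IsLeast {r : ℝ | ∃ a : ℂ, g a = 0 ∧ ‖a‖ = r} r0)
    (p : ℕ → ℂ → ℂ)
    (hp : ∀ (n : ℕ) (x : ℂ) (ε : ℝ), 0 < ε → ε < r0 →
      p n x = (1 / (2 * (Real.pi : ℂ) * Complex.I)) *
        ∮ t in C(0, ε), Complex.exp (x * t) / (g t * t ^ (n + 1)))
    (nk : ℕ → ℕ) (hmono : StrictMono nk) (hpos : ∀ k, 1 ≤ nk k)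
    (x : ℕ → ℂ) (hzero : ∀ k, p (nk k) ((nk k : ℂ) * x k) = 0)
    (xstar : ℂ) (hlim : Filter.Tendsto x Filter.atTop (nhds xstar)) :
    ‖xstar‖ ≤ 1 / r0 :=
  stmt_6_general g hg r0 hr0pos hr0 p hp nk hmono x hzero xstar hlim
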